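/- Let ε > 0, let U ⊆ ℝ² be open and bounded, and let u : ℤ² → ℝ. Then there exists ũ : ℤ² → ℝ with ũ(i) − u(i) ∈ ℤ for every i ∈ ℤ², such that for every i ∈ Z_ε^{e₁}(U) one has ũ(i + e₁) − ũ(i) = E(u(i + e₁) − u(i)), where E(t) := t − ⌈t − 1/2⌉; consequently F_ε^{screw}(u,U) = F_ε^{screw}(ũ,U) = F_ε^{edge}(ũ,U). -/

import Mathlib

open scoped ENNReal

/-- The plane `ℝ²` with the Euclidean norm. -/
abbrev Plane : Type := EuclideanSpace ℝ (Fin 2)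

/-- The lattice point `i ∈ ℤ²` viewed as a point of the plane. -/
noncomputable def toPlane (i : ℤ × ℤ) : Plane :=
  (WithLp.equiv 2 (Fin 2 → ℝ)).symm ![(i.1 : ℝ), (i.2 : ℝ)]

/-- `Z_ε^{e}(A)`: the lattice points `i` such that the closed segment `[εi, ε(i+e)]`
is contained in `A`. -/
def latticeSeg (ε : ℝ) (e : ℤ × ℤ) (A : Set Plane) : Set (ℤ × ℤ) :=
  {i | segment ℝ (ε • toPlane i) (ε • toPlane (i + e)) ⊆ A}

/-- The distance of a real number to the set of integers. -/
noncomputable def distZ (t : ℝ) : ℝ := ⨅ n : ℤ, |t - n|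

/-- The distance of a real number to the set of half-integers `(1/2)ℤ`. -/
noncomputable def distHalfZ (t : ℝ) : ℝ := ⨅ n : ℤ, |t - n / 2|

/-- The interaction potential `f₀(t) = 2π²t²`. -/
noncomputable def f0 (t : ℝ) : ℝ := 2 * Real.pi ^ 2 * t ^ 2

/-- The interaction potential `f₁(t) = 2π²·dist(t,ℤ)²`. -/
noncomputable def f1 (t : ℝ) : ℝ := 2 * Real.pi ^ 2 * distZ t ^ 2

/-- The interaction potential `f_{1/2}(t) = 2π²·dist(t,(1/2)ℤ)²`. -/
noncomputable def fHalf (t : ℝ) : ℝ := 2 * Real.pi ^ 2 * distHalfZ t ^ 2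

/-- The edge-dislocation energy `F_ε^{edge}(u,A)`, a sum in `[0,∞]`. -/
noncomputable def Fedge (ε : ℝ) (u : ℤ × ℤ → ℝ) (A : Set Plane) : ℝ≥0∞ :=
  (∑' i : latticeSeg ε (1, 0) A, ENNReal.ofReal (f0 (u ((i : ℤ × ℤ) + (1, 0)) - u (i : ℤ × ℤ))))
    + ∑' i : latticeSeg ε (0, 1) A, ENNReal.ofReal (f1 (u ((i : ℤ × ℤ) + (0, 1)) - u (i : ℤ × ℤ)))

/-- The screw-dislocation energy `F_ε^{screw}(u,A)`, a sum in `[0,∞]`. -/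
noncomputable def Fscrew (ε : ℝ) (u : ℤ × ℤ → ℝ) (A : Set Plane) : ℝ≥0∞ :=
  (∑' i : latticeSeg ε (1, 0) A, ENNReal.ofReal (f1 (u ((i : ℤ × ℤ) + (1, 0)) - u (i : ℤ × ℤ))))
    + ∑' i : latticeSeg ε (0, 1) A, ENNReal.ofReal (f1 (u ((i : ℤ × ℤ) + (0, 1)) - u (i : ℤ × ℤ)))

/-- The partial-edge-dislocation energy `F_ε^{p-edge}(u,A)` (with parameter `α`),
a sum in `[0,∞]`. -/
noncomputable def Fpedge (α ε : ℝ) (u : ℤ × ℤ → ℝ) (A : Set Plane) : ℝ≥0∞ :=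
  (∑' i : latticeSeg ε (1, 0) A, ENNReal.ofReal (f0 (u ((i : ℤ × ℤ) + (1, 0)) - u (i : ℤ × ℤ))))
    + (∑' i : latticeSeg ε (0, 1) A,
        ENNReal.ofReal (fHalf (u ((i : ℤ × ℤ) + (0, 1)) - u (i : ℤ × ℤ))))
    + ENNReal.ofReal (α / Real.pi ^ 2 * ε) *
        ∑' i : latticeSeg ε (0, 2) A, ENNReal.ofReal (f1 (u ((i : ℤ × ℤ) + (0, 2)) - u (i : ℤ × ℤ)))

/-- The elastic part `E(t) = t − ⌈t − 1/2⌉` of an increment `t`. -/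
noncomputable def elast (t : ℝ) : ℝ := t - ⌈t - 1 / 2⌉

/-
Subtracting an integer-valued field from `u` changes no `f₁`-term, since `f₁` is `1`-periodic.
Along each horizontal line choose the integer shift as a discrete primitive of the rounded
increments `⌈u(i + e₁) − u(i) − 1/2⌉`; then every horizontal increment of `ũ` lies in
`[−1/2, 1/2]`, where `dist(t, ℤ) = |t|` and hence `f₁ = f₀`.
-/

open Finset in
theorem exists_forall_add_one_eq_add {G : Type*} [AddCommGroup G] (f : ℤ → G) :
    ∃ h : ℤ → G, ∀ n, h (n + 1) = h n + f n := by
  refine ⟨fun n => ∑ k ∈ Ico 0 n, f k - ∑ k ∈ Ico n 0, f k, fun n => ?_⟩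
  beta_reduce
  rcases le_or_gt 0 n with hn | hn
  · rw [← sum_Ico_add_eq_sum_Ico_add_one hn, Ico_eq_empty_of_le hn,
      Ico_eq_empty_of_le (by omega : 0 ≤ n + 1)]
    abel
  · rw [← insert_Ico_add_one_left_eq_Ico hn, sum_insert (by simp), Ico_eq_empty_of_le hn.le,
      Ico_eq_empty_of_le (by omega : n + 1 ≤ 0)]
    abel

theorem exists_forall_add_one_zero_eq_add {G : Type*} [AddCommGroup G] (d : ℤ × ℤ → G) :
    ∃ c : ℤ × ℤ → G, ∀ i, c (i + (1, 0)) = c i + d i := by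
  choose h hh using fun m : ℤ => exists_forall_add_one_eq_add fun n => d (n, m)
  exact ⟨fun i => h i.2 i.1, fun ⟨a, b⟩ => by simpa using hh b a⟩

theorem distZ_sub_intCast (t : ℝ) (z : ℤ) : distZ (t - z) = distZ t := by
  unfold distZ
  rw [← (Equiv.subRight z).iInf_comp]
  refine iInf_congr fun n => ?_
  simp only [Equiv.subRight_apply, Int.cast_sub]
  ring_nf

theorem distZ_eq_abs_of_abs_le_half {t : ℝ} (ht : |t| ≤ 1 / 2) : distZ t = |t| := by
  refine le_antisymm ?_ (le_ciInf fun n => ?_)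
  · have hbdd : BddBelow (Set.range fun n : ℤ => |t - n|) :=
      ⟨0, by rintro _ ⟨n, rfl⟩; positivity⟩
    simpa [distZ] using ciInf_le hbdd 0
  · rcases eq_or_ne n 0 with rfl | hn
    · simp
    · have h1 : (1 : ℝ) ≤ |(n : ℝ)| := by exact_mod_cast Int.one_le_abs hn
      have h2 := abs_sub_abs_le_abs_sub (n : ℝ) t
      rw [abs_sub_comm] at h2
      linarith

theorem f1_sub_intCast (t : ℝ) (z : ℤ) : f1 (t - z) = f1 t := by
  rw [f1, distZ_sub_intCast, f1]

theorem f1_eq_f0_of_abs_le_half {t : ℝ} (ht : |t| ≤ 1 / 2) : f1 t = f0 t := by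
  rw [f1, f0, distZ_eq_abs_of_abs_le_half ht, sq_abs]

theorem abs_elast_le_half (t : ℝ) : |elast t| ≤ 1 / 2 := by
  have h1 := Int.le_ceil (t - 1 / 2)
  have h2 := Int.ceil_lt_add_one (t - 1 / 2)
  rw [abs_le, elast]
  constructor <;> linarith

theorem Fscrew_sub_intCast (ε : ℝ) (u : ℤ × ℤ → ℝ) (c : ℤ × ℤ → ℤ) (A : Set Plane) :
    Fscrew ε (fun i => u i - c i) A = Fscrew ε u A := by
  have hf1 : ∀ i e : ℤ × ℤ, f1 (u (i + e) - c (i + e) - (u i - c i)) = f1 (u (i + e) - u i) :=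
    fun i e => by
      rw [← f1_sub_intCast (u (i + e) - u i) (c (i + e) - c i)]
      push_cast
      ring_nf
  simp only [Fscrew, hf1]

theorem Fscrew_eq_Fedge_of_abs_le_half (ε : ℝ) (u : ℤ × ℤ → ℝ) (A : Set Plane)
    (hu : ∀ i ∈ latticeSeg ε (1, 0) A, |u (i + (1, 0)) - u i| ≤ 1 / 2) :
    Fscrew ε u A = Fedge ε u A := by
  rw [Fscrew, Fedge]
  congr 1
  exact tsum_congr fun i => by rw [f1_eq_f0_of_abs_le_half (hu i i.2)]

theorem stmt9_general (ε : ℝ) (U : Set Plane) (u : ℤ × ℤ → ℝ) :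
    ∃ ut : ℤ × ℤ → ℝ,
      (∀ i : ℤ × ℤ, ∃ z : ℤ, ut i - u i = z) ∧
      (∀ i ∈ latticeSeg ε (1, 0) U, ut (i + (1, 0)) - ut i = elast (u (i + (1, 0)) - u i)) ∧
      Fscrew ε u U = Fscrew ε ut U ∧ Fscrew ε ut U = Fedge ε ut U := by
  obtain ⟨c, hc⟩ := exists_forall_add_one_zero_eq_add fun i => ⌈u (i + (1, 0)) - u i - 1 / 2⌉
  set ut : ℤ × ℤ → ℝ := fun i => u i - c i
  have hinc : ∀ i, ut (i + (1, 0)) - ut i = elast (u (i + (1, 0)) - u i) := fun i => by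
    simp only [ut, hc i, elast, Int.cast_add]
    ring
  refine ⟨ut, fun i => ⟨-c i, by simp [ut]⟩, fun i _ => hinc i,
    (Fscrew_sub_intCast ε u c U).symm, ?_⟩
  exact Fscrew_eq_Fedge_of_abs_le_half ε ut U fun i _ => hinc i ▸ abs_elast_le_half _

/-- for `ε > 0`, `U` open and bounded, and any displacement `u : ℤ² → ℝ`, there is
`ũ` with `ũ − u` integer-valued such that horizontal increments of `ũ` in `U` equal the elastic
parts of those of `u`; consequently `F_ε^{screw}(u,U) = F_ε^{screw}(ũ,U) = F_ε^{edge}(ũ,U)`. -/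
theorem stmt9 (ε : ℝ) (hε : 0 < ε) (U : Set Plane) (hUo : IsOpen U)
    (hUb : Bornology.IsBounded U) (u : ℤ × ℤ → ℝ) :
    ∃ ut : ℤ × ℤ → ℝ,
      (∀ i : ℤ × ℤ, ∃ z : ℤ, ut i - u i = z) ∧
      (∀ i ∈ latticeSeg ε (1, 0) U, ut (i + (1, 0)) - ut i = elast (u (i + (1, 0)) - u i)) ∧
      Fscrew ε u U = Fscrew ε ut U ∧ Fscrew ε ut U = Fedge ε ut U :=
  stmt9_general ε U u
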